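/- Let X be an n×p real matrix such that the smallest eigenvalue of (1/n)XᵀX is at least c > 0. Then for any two index sets γ ⊂ γ̄ with γ ≠ γ̄, the smallest eigenvalue of (1/n)·X_{γ̄\γ}ᵀ(I_n − P_γ)X_{γ̄\γ} is at least c, where X_γ denotes the submatrix of X with columns indexed by γ, and P_γ = X_γ(X_γᵀX_γ)⁻¹X_γᵀ is the orthogonal projection onto the column space of X_γ. -/
import Mathlib
open Matrix

noncomputable def myExt {p : ℕ} (s : Finset (Fin p)) (w : {i // i ∈ s} → ℝ) : Fin p → ℝ :=
  fun j => if h : j ∈ s then w ⟨j, h⟩ else 0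

lemma submatrix_mulVec_ext {n p : ℕ} (X : Matrix (Fin n) (Fin p) ℝ) (s : Finset (Fin p))
    (w : {i // i ∈ s} → ℝ) :
    (X.submatrix id (fun i : {i // i ∈ s} => (i : Fin p))) *ᵥ w = X *ᵥ myExt s w := by
  funext i
  simp only [mulVec, dotProduct, submatrix_apply, id]
  rw [show (∑ j : Fin p, X i j * myExt s w j) = ∑ j ∈ s, X i j * myExt s w j from
    (Finset.sum_subset (Finset.subset_univ s) (fun x _ hx => by simp [myExt, hx])).symm]
  rw [← Finset.sum_coe_sort s (fun j => X i j * myExt s w j)]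
  exact Finset.sum_congr rfl (fun a _ => by simp [myExt, a.2])

lemma ext_dot_ext {p : ℕ} (s : Finset (Fin p)) (w w' : {i // i ∈ s} → ℝ) :
    myExt s w ⬝ᵥ myExt s w' = w ⬝ᵥ w' := by
  simp only [dotProduct]
  rw [show (∑ j : Fin p, myExt s w j * myExt s w' j) = ∑ j ∈ s, myExt s w j * myExt s w' j from
    (Finset.sum_subset (Finset.subset_univ s) (fun x _ hx => by simp [myExt, hx])).symm]
  rw [← Finset.sum_coe_sort s (fun j => myExt s w j * myExt s w' j)]
  exact Finset.sum_congr rfl (fun a _ => by simp [myExt, a.2])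

lemma ext_dot_ext_disjoint {p : ℕ} (s t : Finset (Fin p)) (hd : Disjoint s t)
    (w : {i // i ∈ s} → ℝ) (z : {i // i ∈ t} → ℝ) :
    myExt s w ⬝ᵥ myExt t z = 0 := by
  simp only [dotProduct]
  apply Finset.sum_eq_zero
  intro j _
  by_cases hj : j ∈ s
  · have : j ∉ t := Finset.disjoint_left.mp hd hj
    simp [myExt, this]
  · simp [myExt, hj]

lemma dp_self_nonneg {ι : Type*} [Fintype ι] (v : ι → ℝ) : 0 ≤ v ⬝ᵥ v :=
  Finset.sum_nonneg fun _ _ => mul_self_nonneg _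

/-- If the smallest eigenvalue of `(1/n)XᵀX` is at least `c > 0`, then for index sets
`γ ⊆ γ̄`, `γ ≠ γ̄`, the smallest eigenvalue of
`(1/n)·X_{γ̄\γ}ᵀ(I − P_γ)X_{γ̄\γ}` is at least `c`, where `P_γ` is the orthogonal
projection onto the column space of `X_γ`. Eigenvalue bounds are expressed via
quadratic forms. -/
theorem stmt_0 {n p : ℕ} (c : ℝ) (hc : 0 < c)
    (X : Matrix (Fin n) (Fin p) ℝ)
    (hmin : ∀ v : Fin p → ℝ,
      c * (v ⬝ᵥ v) ≤ v ⬝ᵥ ((((n : ℝ)⁻¹ • (Xᵀ * X))) *ᵥ v))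
    (γ γb : Finset (Fin p)) (hsub : γ ⊆ γb) (hne : γ ≠ γb) :
    ∀ v : {i // i ∈ γb \ γ} → ℝ,
      c * (v ⬝ᵥ v) ≤
        v ⬝ᵥ ((((n : ℝ)⁻¹ •
          ((X.submatrix id (fun i : {i // i ∈ γb \ γ} => (i : Fin p)))ᵀ *
            (1 - X.submatrix id (fun i : {i // i ∈ γ} => (i : Fin p)) *
                ((X.submatrix id (fun i : {i // i ∈ γ} => (i : Fin p)))ᵀ *
                  X.submatrix id (fun i : {i // i ∈ γ} => (i : Fin p)))⁻¹ *
                (X.submatrix id (fun i : {i // i ∈ γ} => (i : Fin p)))ᵀ) *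
            X.submatrix id (fun i : {i // i ∈ γb \ γ} => (i : Fin p))))) *ᵥ v) := by
  classical
  intro v
  set A := X.submatrix id (fun i : {i // i ∈ γb \ γ} => (i : Fin p)) with hAdef
  set W := X.submatrix id (fun i : {i // i ∈ γ} => (i : Fin p)) with hWdef
  -- degenerate case n = 0
  rcases Nat.eq_zero_or_pos n with hn0 | hnpos
  · subst hn0
    obtain ⟨i, hiγb, hiγ⟩ := Finset.exists_of_ssubset (hsub.ssubset_of_ne hne)
    have h0 := hmin (Pi.single i 1)
    simp only [Nat.cast_zero, _root_.inv_zero, zero_smul, Matrix.zero_mulVec,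
      dotProduct_zero] at h0
    have h1 : (Pi.single i 1 : Fin p → ℝ) ⬝ᵥ Pi.single i 1 = 1 := by
      simp [dotProduct, Pi.single_apply]
    rw [h1, mul_one] at h0
    exact absurd h0 (not_le.mpr hc)
  have hn : (0 : ℝ) < n := by exact_mod_cast hnpos
  -- key quadratic bound
  have key : ∀ u : Fin p → ℝ, (n : ℝ) * (c * (u ⬝ᵥ u)) ≤ (X *ᵥ u) ⬝ᵥ (X *ᵥ u) := by
    intro u
    have h := hmin u
    rw [smul_mulVec, dotProduct_smul, smul_eq_mul, ← mulVec_mulVec, dotProduct_mulVec,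
      vecMul_transpose] at h
    calc (n : ℝ) * (c * (u ⬝ᵥ u)) ≤ (n : ℝ) * ((n : ℝ)⁻¹ * ((X *ᵥ u) ⬝ᵥ (X *ᵥ u))) :=
          mul_le_mul_of_nonneg_left h hn.le
      _ = (X *ᵥ u) ⬝ᵥ (X *ᵥ u) := by field_simp
  -- G = WᵀW invertible
  set G := Wᵀ * W with hGdef
  have hWv : ∀ w : {i // i ∈ γ} → ℝ, w ⬝ᵥ (G *ᵥ w) = (W *ᵥ w) ⬝ᵥ (W *ᵥ w) := by
    intro w
    rw [← mulVec_mulVec, dotProduct_mulVec, vecMul_transpose]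
  have hdet : G.det ≠ 0 := by
    intro hd
    obtain ⟨w, hw0, hww⟩ := (Matrix.exists_mulVec_eq_zero_iff).mpr hd
    have h1 : w ⬝ᵥ (G *ᵥ w) = 0 := by rw [hww, dotProduct_zero]
    rw [hWv w, hWdef, submatrix_mulVec_ext] at h1
    have h2 := key (myExt γ w)
    rw [h1, ext_dot_ext] at h2
    have hwpos : 0 < w ⬝ᵥ w := by
      rcases lt_or_eq_of_le (dp_self_nonneg w) with h | h
      · exact h
      · exact absurd ((dotProduct_self_eq_zero).mp h.symm) hw0
    exact absurd h2 (not_le.mpr (by positivity))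
  have hGinv : G * G⁻¹ = 1 := Matrix.mul_nonsing_inv G (isUnit_iff_ne_zero.mpr hdet)
  -- the minimizing coefficient
  set z : {i // i ∈ γ} → ℝ := G⁻¹ *ᵥ (Wᵀ *ᵥ (A *ᵥ v)) with hzdef
  have hGz : G *ᵥ z = Wᵀ *ᵥ (A *ᵥ v) := by
    rw [hzdef, mulVec_mulVec, hGinv, one_mulVec]
  set r : Fin n → ℝ := A *ᵥ v - W *ᵥ z with hrdef
  -- orthogonality
  have hWr : Wᵀ *ᵥ r = 0 := by
    have e1 : Wᵀ *ᵥ (W *ᵥ z) = Wᵀ *ᵥ (A *ᵥ v) := by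
      rw [mulVec_mulVec, ← hGdef, hGz]
    rw [hrdef, mulVec_sub, e1, sub_self]
  have horth : (W *ᵥ z) ⬝ᵥ r = 0 := by
    rw [dotProduct_comm, dotProduct_mulVec, ← mulVec_transpose, hWr, zero_dotProduct]
  -- RHS simplification
  have hQ : (W * G⁻¹ * Wᵀ) *ᵥ (A *ᵥ v) = W *ᵥ z := by
    rw [hzdef]; simp only [mulVec_mulVec, Matrix.mul_assoc]
  have hRHS : v ⬝ᵥ ((((n : ℝ)⁻¹ • (Aᵀ * (1 - W * G⁻¹ * Wᵀ) * A)) *ᵥ v))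
      = (n : ℝ)⁻¹ * ((A *ᵥ v) ⬝ᵥ r) := by
    rw [smul_mulVec, dotProduct_smul, smul_eq_mul]
    congr 1
    rw [Matrix.mul_assoc, ← mulVec_mulVec, dotProduct_mulVec, vecMul_transpose]
    congr 1
    rw [← mulVec_mulVec, sub_mulVec, one_mulVec, hQ, hrdef]
  -- the extended vector
  have hdisj : Disjoint (γb \ γ) γ := Finset.sdiff_disjoint
  set u : Fin p → ℝ := myExt (γb \ γ) v - myExt γ z with hudef
  have hXu : X *ᵥ u = r := by
    rw [hudef, mulVec_sub, hrdef, ← submatrix_mulVec_ext X (γb \ γ) v,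
      ← submatrix_mulVec_ext X γ z, ← hAdef, ← hWdef]
  have huu : u ⬝ᵥ u = v ⬝ᵥ v + z ⬝ᵥ z := by
    rw [hudef, dotProduct_sub, sub_dotProduct, sub_dotProduct,
      ext_dot_ext, ext_dot_ext, ext_dot_ext_disjoint _ _ hdisj,
      ext_dot_ext_disjoint _ _ hdisj.symm]
    ring
  have hkey := key u
  rw [hXu, huu] at hkey
  have hrr : r ⬝ᵥ r = (A *ᵥ v) ⬝ᵥ r := by
    have h : (A *ᵥ v) ⬝ᵥ r = r ⬝ᵥ r + (W *ᵥ z) ⬝ᵥ r := by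
      rw [hrdef, sub_dotProduct]; ring
    rw [h, horth, add_zero]
  rw [hrr] at hkey
  rw [hRHS]
  have hzz : 0 ≤ z ⬝ᵥ z := dp_self_nonneg z
  have h1 : c * (v ⬝ᵥ v) ≤ c * (v ⬝ᵥ v + z ⬝ᵥ z) := by nlinarith
  have h2 : c * (v ⬝ᵥ v + z ⬝ᵥ z) ≤ (n : ℝ)⁻¹ * ((A *ᵥ v) ⬝ᵥ r) := by
    calc c * (v ⬝ᵥ v + z ⬝ᵥ z)
        = (n : ℝ)⁻¹ * ((n : ℝ) * (c * (v ⬝ᵥ v + z ⬝ᵥ z))) := by field_simp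
      _ ≤ (n : ℝ)⁻¹ * ((A *ᵥ v) ⬝ᵥ r) :=
          mul_le_mul_of_nonneg_left hkey (inv_nonneg.mpr hn.le)
  linarith
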